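/- arXiv:1306.4357 — 5 statements merged into one kernel-verified Lean document; each statement's English description precedes it below -/
import Mathlib

section
/- Let (X, μ, T) be an infinite measure preserving, ergodic, recurrent Z²-action on a σ-finite Lebesgue space. If θ ∈ [0, π) is a recurrent direction for T, then θ has the uniform sweeping out property for every measurable set A with 0 < μ(A) < ∞. That is, for every ε > 0 and every 0 < α < 1/2 there exist pairwise disjoint positive-measure subsets A₁,…,A_k of A and vectors v₁,…,v_k ∈ Z² in the ε-tunnel of θ such that T^{v₁}A₁,…,T^{v_k}A_k are pairwise disjoint subsets of A, μ(∪ᵢ Aᵢ) > α·μ(A), and μ(∪ᵢ T^{vᵢ}Aᵢ) > α·μ(A). -/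
open MeasureTheory

noncomputable section

/-- Embedding of `ℤ²` into `ℝ²`. -/
def toR (n : ℤ × ℤ) : ℝ × ℝ := ((n.1 : ℝ), (n.2 : ℝ))

/-- The Euclidean norm on `ℝ²`. -/
def e2 (p : ℝ × ℝ) : ℝ := Real.sqrt (p.1 ^ 2 + p.2 ^ 2)

/-- `p` lies in the `ε`-tunnel of the direction `θ`, i.e. within Euclidean distance `ε`
of the line through the origin in direction `θ`. -/
def InTunnel (θ ε : ℝ) (p : ℝ × ℝ) : Prop :=
  ∃ t : ℝ, e2 (p - (t * Real.cos θ, t * Real.sin θ)) < ε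

/-- The direction in `[0,π)` associated to a vector `u`: the angle `u` makes with
`sign(u₂)·(1,0)`, and `0` if `u₂ = 0`. -/
def dirOf (u : ℝ × ℝ) : Real :=
  if u.2 = 0 then 0 else Real.arccos (Real.sign u.2 * u.1 / e2 u)

variable {X : Type*} [MeasurableSpace X]

/-- `θ` is a recurrent direction for the `ℤ²`-action `T`. -/
def RecurrentDirection (μ : Measure X) (T : ℤ × ℤ → X → X) (θ : ℝ) : Prop :=
  ∀ ε : ℝ, 0 < ε → ∀ A : Set X, MeasurableSet A → 0 < μ A →
    ∃ n : ℤ × ℤ, n ≠ 0 ∧ InTunnel θ ε (toR n) ∧ 0 < μ (A ∩ T n ⁻¹' A)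

/-- Ergodicity of a `ℤ²`-action. -/
def IsErgodicAction (μ : Measure X) (T : ℤ × ℤ → X → X) : Prop :=
  ∀ A : Set X, MeasurableSet A → (∀ n, T n ⁻¹' A = A) → μ A = 0 ∨ μ Aᶜ = 0

/-- Recurrence of a `ℤ²`-action. -/
def IsRecurrentAction (μ : Measure X) (T : ℤ × ℤ → X → X) : Prop :=
  ∀ A : Set X, MeasurableSet A → 0 < μ A →
    ∃ u : ℤ × ℤ, u ≠ 0 ∧ 0 < μ (A ∩ T u ⁻¹' A)

/-- The `ε` sweeping out property of the direction `θ` for the set `A`. -/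
def SweepsOut (μ : Measure X) (T : ℤ × ℤ → X → X) (θ ε : ℝ) (A : Set X) : Prop :=
  ∀ α : ℝ, 0 < α → α < 1/2 →
    ∃ (k : ℕ) (As : Fin k → Set X) (v : Fin k → ℤ × ℤ),
      (∀ i, MeasurableSet (As i)) ∧ (∀ i, As i ⊆ A) ∧ (∀ i, 0 < μ (As i)) ∧
      (Pairwise fun i j => Disjoint (As i) (As j)) ∧
      (∀ i, InTunnel θ ε (toR (v i))) ∧
      (∀ i, T (v i) '' As i ⊆ A) ∧
      (Pairwise fun i j => Disjoint (T (v i) '' As i) (T (v j) '' As j)) ∧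
      ENNReal.ofReal α * μ A < μ (⋃ i, As i) ∧
      ENNReal.ofReal α * μ A < μ (⋃ i, T (v i) '' As i)

open Set Function Finset Filter Topology
open scoped ENNReal

/-! Greedy exhaustion. From the current residual `B ⊆ A` remove `C = B ∩ T^{-v} B` together
with `T^v C`, for a tunnel vector `v` making `μ C` at least half the best possible. The pieces
`C` are disjoint, as are their images, so their measures sum to at most `μ A < ∞`. If the limit
of the residuals had positive measure, recurrence of `θ` would give it a return of some fixed
positive size, and every piece would have at least half that size: impossible. So the residuals
shrink to a null set, and since each step removes at most `2 μ C`, the pieces carry at least half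
of `μ A`. -/

theorem MeasureTheory.MeasurePreserving.measure_image_equiv {α β : Type*} [MeasurableSpace α]
    [MeasurableSpace β] {μa : Measure α} {μb : Measure β} {e : α ≃ᵐ β}
    (he : MeasurePreserving e μa μb) (s : Set α) : μb (e '' s) = μa s := by
  rw [e.image_eq_preimage_symm, (he.symm e).measure_preimage_equiv]

theorem MeasureTheory.measure_iUnion_fin_eq_sum_range {μ : Measure X} {f : ℕ → Set X}
    (hd : Pairwise (Disjoint on f)) (hf : ∀ i, MeasurableSet (f i)) (k : ℕ) :
    μ (⋃ i : Fin k, f i) = ∑ i ∈ range k, μ (f i) := by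
  rw [measure_iUnion (f := fun i : Fin k => f i) (fun i j hij => hd (Fin.val_injective.ne hij))
    (fun i => hf i), tsum_fintype, Fin.sum_univ_eq_sum_range (fun i => μ (f i))]

theorem ENNReal.ofReal_mul_lt_div_two {α : ℝ} (hα : α < 1 / 2) {a : ℝ≥0∞} (h0 : a ≠ 0)
    (htop : a ≠ ∞) : ENNReal.ofReal α * a < a / 2 := by
  rw [ENNReal.div_eq_inv_mul, ENNReal.mul_lt_mul_iff_left h0 htop, ← ENNReal.ofReal_ofNat 2,
    ← ENNReal.ofReal_inv_of_pos two_pos]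
  exact ENNReal.ofReal_lt_ofReal_iff (by norm_num) |>.2 (by linarith)

def actionEquiv {G : Type*} [AddGroup G] (T : G → X → X) (hT : ∀ g, Measurable (T g))
    (hadd : ∀ g h x, T (g + h) x = T g (T h x)) (hzero : ∀ x, T 0 x = x) (g : G) :
    X ≃ᵐ X where
  toFun := T g
  invFun := T (-g)
  left_inv x := by rw [← hadd, neg_add_cancel, hzero]
  right_inv x := by rw [← hadd, add_neg_cancel, hzero]
  measurable_toFun := hT g
  measurable_invFun := hT (-g)

def RecurrentAlong {ι : Type*} (μ : Measure X) (e : ι → X ≃ᵐ X) (P : Set ι) : Prop :=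
  ∀ B, MeasurableSet B → 0 < μ B → ∃ i ∈ P, 0 < μ (B ∩ e i ⁻¹' B)

theorem RecurrentAlong.exists_half_iSup_lt {ι : Type*} {μ : Measure X} {e : ι → X ≃ᵐ X}
    {P : Set ι} (hrec : RecurrentAlong μ e P) {B : Set X} (hB : MeasurableSet B)
    (hBpos : 0 < μ B) (hBfin : μ B ≠ ∞) :
    ∃ i ∈ P, (⨆ j ∈ P, μ (B ∩ e j ⁻¹' B)) / 2 < μ (B ∩ e i ⁻¹' B) := by
  obtain ⟨j, hjP, hj⟩ := hrec B hB hBpos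
  have hpos : 0 < ⨆ j ∈ P, μ (B ∩ e j ⁻¹' B) :=
    hj.trans_le (le_iSup₂ (f := fun j (_ : j ∈ P) => μ (B ∩ e j ⁻¹' B)) j hjP)
  have hfin : ⨆ j ∈ P, μ (B ∩ e j ⁻¹' B) ≠ ∞ :=
    ne_top_of_le_ne_top hBfin (iSup₂_le fun _ _ => measure_mono inter_subset_left)
  exact lt_biSup_iff.1 (ENNReal.half_lt_self hpos.ne' hfin)

namespace GreedyExhaustion

variable {ι : Type*} (e : ι → X ≃ᵐ X) (next : Set X → ι)

def returnSet (B : Set X) : Set X := B ∩ e (next B) ⁻¹' B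

def residual (A : Set X) : ℕ → Set X
  | 0 => A
  | k + 1 => residual A k \ (returnSet e next (residual A k) ∪
      e (next (residual A k)) '' returnSet e next (residual A k))

def piece (A : Set X) (k : ℕ) : Set X := returnSet e next (residual e next A k)

def shift (A : Set X) (k : ℕ) : ι := next (residual e next A k)

/-- Half of the supremum, since it need not be attained. -/
def IsGreedyChoice (μ : Measure X) (P : Set ι) : Prop :=
  ∀ B, MeasurableSet B → 0 < μ B → μ B ≠ ∞ →
    next B ∈ P ∧ (⨆ i ∈ P, μ (B ∩ e i ⁻¹' B)) / 2 < μ (returnSet e next B)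

variable {e next} {μ : Measure X} {P : Set ι} {A : Set X}

theorem exists_isGreedyChoice [Nonempty ι] (hrec : RecurrentAlong μ e P) :
    ∃ next, IsGreedyChoice e next μ P := by
  have hchoice : ∀ B : Set X, ∃ i, MeasurableSet B → 0 < μ B → μ B ≠ ∞ →
      i ∈ P ∧ (⨆ j ∈ P, μ (B ∩ e j ⁻¹' B)) / 2 < μ (B ∩ e i ⁻¹' B) := by
    intro B
    by_cases hB : MeasurableSet B ∧ 0 < μ B ∧ μ B ≠ ∞
    · obtain ⟨i, hi⟩ := hrec.exists_half_iSup_lt hB.1 hB.2.1 hB.2.2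
      exact ⟨i, fun _ _ _ => hi⟩
    · exact ⟨Classical.arbitrary ι, fun h₁ h₂ h₃ => absurd ⟨h₁, h₂, h₃⟩ hB⟩
  choose next hnext using hchoice
  exact ⟨next, hnext⟩

theorem residual_succ (k : ℕ) :
    residual e next A (k + 1) =
      residual e next A k \ (piece e next A k ∪ e (shift e next A k) '' piece e next A k) :=
  rfl

theorem piece_subset_residual (k : ℕ) : piece e next A k ⊆ residual e next A k :=
  inter_subset_left

theorem image_piece_subset_residual (k : ℕ) :
    e (shift e next A k) '' piece e next A k ⊆ residual e next A k :=
  (image_mono inter_subset_right).trans (image_preimage_subset _ _)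

theorem residual_antitone : Antitone (residual e next A) :=
  antitone_nat_of_succ_le fun _ => sdiff_subset

theorem residual_subset (k : ℕ) : residual e next A k ⊆ A :=
  residual_antitone (Nat.zero_le k)

theorem measure_residual_ne_top (hAfin : μ A ≠ ∞) (k : ℕ) :
    μ (residual e next A k) ≠ ∞ :=
  measure_ne_top_of_subset (residual_subset k) hAfin

theorem measurableSet_returnSet {B : Set X} (hB : MeasurableSet B) :
    MeasurableSet (returnSet e next B) :=
  hB.inter ((e _).measurable hB)

theorem measurableSet_residual (hA : MeasurableSet A) (k : ℕ) :
    MeasurableSet (residual e next A k) := by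
  induction k with
  | zero => exact hA
  | succ k ih =>
    have hC := measurableSet_returnSet (e := e) (next := next) ih
    exact ih.diff (hC.union ((e _).measurableSet_image.2 hC))

theorem measurableSet_piece (hA : MeasurableSet A) (k : ℕ) : MeasurableSet (piece e next A k) :=
  measurableSet_returnSet (measurableSet_residual hA k)

theorem disjoint_residual_of_lt {i j : ℕ} (hij : i < j) :
    Disjoint (piece e next A i ∪ e (shift e next A i) '' piece e next A i)
      (residual e next A j) :=
  disjoint_sdiff_right.mono_right (residual_antitone hij)

theorem pairwise_disjoint_piece : Pairwise (Disjoint on piece e next A) := by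
  refine pairwise_disjoint_on _ |>.2 fun i j hij => ?_
  exact (disjoint_residual_of_lt hij).mono subset_union_left (piece_subset_residual j)

theorem pairwise_disjoint_image_piece :
    Pairwise (Disjoint on fun k => e (shift e next A k) '' piece e next A k) := by
  refine pairwise_disjoint_on _ |>.2 fun i j hij => ?_
  exact (disjoint_residual_of_lt hij).mono subset_union_right (image_piece_subset_residual j)

theorem tsum_measure_piece_le (hA : MeasurableSet A) : ∑' k, μ (piece e next A k) ≤ μ A := by
  rw [← measure_iUnion pairwise_disjoint_piece (measurableSet_piece hA)]
  exact measure_mono (iUnion_subset fun k => (piece_subset_residual k).trans (residual_subset k))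

theorem IsGreedyChoice.shift_mem_and_measure_piece_pos (hnext : IsGreedyChoice e next μ P)
    (hA : MeasurableSet A) (hAfin : μ A ≠ ∞) {k : ℕ} (hk : 0 < μ (residual e next A k)) :
    shift e next A k ∈ P ∧ 0 < μ (piece e next A k) :=
  have h := hnext _ (measurableSet_residual hA k) hk (measure_residual_ne_top hAfin k)
  ⟨h.1, pos_of_gt h.2⟩

theorem IsGreedyChoice.half_measure_return_le_piece (hnext : IsGreedyChoice e next μ P)
    (hA : MeasurableSet A) (hAfin : μ A ≠ ∞) {k : ℕ} {D : Set X}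
    (hD : D ⊆ residual e next A k) (hDpos : 0 < μ D) {m : ι} (hm : m ∈ P) :
    μ (D ∩ e m ⁻¹' D) / 2 ≤ μ (piece e next A k) := by
  set B := residual e next A k
  calc μ (D ∩ e m ⁻¹' D) / 2 ≤ (⨆ i ∈ P, μ (B ∩ e i ⁻¹' B)) / 2 := by
        gcongr
        exact (measure_mono (inter_subset_inter hD (preimage_mono hD))).trans
          (le_iSup₂ (f := fun i (_ : i ∈ P) => μ (B ∩ e i ⁻¹' B)) m hm)
    _ ≤ μ (piece e next A k) :=
        (hnext B (measurableSet_residual hA k) (hDpos.trans_le (measure_mono hD))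
          (measure_residual_ne_top hAfin k)).2.le

/-- Every piece captures half of the return of `⋂ k, residual A k`; as the pieces are disjoint
subsets of `A`, that return is null. -/
theorem IsGreedyChoice.measure_iInter_residual_eq_zero (hnext : IsGreedyChoice e next μ P)
    (hrec : RecurrentAlong μ e P) (hA : MeasurableSet A) (hAfin : μ A ≠ ∞) :
    μ (⋂ k, residual e next A k) = 0 := by
  set D := ⋂ k, residual e next A k
  by_contra hD
  obtain ⟨m, hmP, hm⟩ := hrec D (.iInter (measurableSet_residual hA)) (pos_iff_ne_zero.2 hD)
  have hle : ∑' _ : ℕ, μ (D ∩ e m ⁻¹' D) / 2 ≤ μ A :=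
    (ENNReal.tsum_le_tsum fun k => hnext.half_measure_return_le_piece hA hAfin
      (iInter_subset _ k) (pos_iff_ne_zero.2 hD) hmP).trans (tsum_measure_piece_le hA)
  rw [ENNReal.tsum_const_eq_top_of_ne_zero (ENNReal.half_pos hm.ne').ne'] at hle
  exact hAfin (top_le_iff.1 hle)

variable (he : ∀ i, MeasurePreserving (e i) μ μ)
include he

theorem measure_residual_le (k : ℕ) :
    μ (residual e next A k) ≤ μ (residual e next A (k + 1)) + 2 * μ (piece e next A k) := by
  calc μ (residual e next A k)
      ≤ μ (residual e next A (k + 1)) +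
          (μ (piece e next A k) + μ (e (shift e next A k) '' piece e next A k)) := by
        grw [residual_succ, ← measure_union_le, ← measure_union_le]
        exact measure_mono (subset_sdiff_union _ _)
    _ = μ (residual e next A (k + 1)) + 2 * μ (piece e next A k) := by
        rw [(he _).measure_image_equiv, two_mul]

theorem measure_le_residual_add_sum (N : ℕ) :
    μ A ≤ μ (residual e next A N) + 2 * ∑ i ∈ range N, μ (piece e next A i) := by
  induction N with
  | zero => simp [residual]
  | succ N ih =>
    grw [ih, measure_residual_le he N, sum_range_succ]
    rw [mul_add, add_assoc, add_comm (2 * _)]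

theorem measure_residual_pos_of_sum_le {β : ℝ≥0∞} (hβ : β < μ A / 2) {N : ℕ}
    (hN : ∑ i ∈ range N, μ (piece e next A i) ≤ β) : 0 < μ (residual e next A N) := by
  refine pos_iff_ne_zero.2 fun h0 => ?_
  have h2 : β * 2 < μ A := (ENNReal.lt_div_iff_mul_lt (by simp) (by simp)).1 hβ
  refine h2.not_ge ?_
  calc μ A ≤ 2 * ∑ i ∈ range N, μ (piece e next A i) := by
        simpa [h0] using measure_le_residual_add_sum he (next := next) (A := A) N
    _ ≤ β * 2 := by grw [hN, mul_comm]

theorem IsGreedyChoice.measure_le_two_mul_tsum_piece (hnext : IsGreedyChoice e next μ P)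
    (hrec : RecurrentAlong μ e P) (hA : MeasurableSet A) (hAfin : μ A ≠ ∞) :
    μ A ≤ 2 * ∑' k, μ (piece e next A k) := by
  have hres : Tendsto (fun N => μ (residual e next A N)) atTop (𝓝 0) := by
    rw [← hnext.measure_iInter_residual_eq_zero hrec hA hAfin]
    exact tendsto_measure_iInter_atTop (s := residual e next A)
      (fun k => (measurableSet_residual hA k).nullMeasurableSet) residual_antitone ⟨0, hAfin⟩
  have hsum := ENNReal.Tendsto.const_mul (a := 2)
    (ENNReal.tendsto_nat_tsum fun k => μ (piece e next A k)) (Or.inr ENNReal.ofNat_ne_top)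
  simpa using ge_of_tendsto' (hres.add hsum) (measure_le_residual_add_sum he (next := next))

end GreedyExhaustion

open GreedyExhaustion in
theorem RecurrentAlong.exists_disjoint_returns {ι : Type*} {μ : Measure X} {e : ι → X ≃ᵐ X}
    {P : Set ι} (hrec : RecurrentAlong μ e P) (he : ∀ i, MeasurePreserving (e i) μ μ)
    {A : Set X} (hA : MeasurableSet A) (hAfin : μ A ≠ ∞) {β : ℝ≥0∞}
    (hβ : β < μ A / 2) :
    ∃ (k : ℕ) (C : Fin k → Set X) (v : Fin k → ι),
      (∀ i, MeasurableSet (C i)) ∧ (∀ i, C i ⊆ A) ∧ (∀ i, 0 < μ (C i)) ∧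
      (Pairwise fun i j => Disjoint (C i) (C j)) ∧ (∀ i, v i ∈ P) ∧
      (∀ i, e (v i) '' C i ⊆ A) ∧
      (Pairwise fun i j => Disjoint (e (v i) '' C i) (e (v j) '' C j)) ∧
      β < μ (⋃ i, C i) ∧ β < μ (⋃ i, e (v i) '' C i) := by
  have hApos : 0 < μ A := pos_iff_ne_zero.2 fun h => by simp [h] at hβ
  obtain ⟨i₀, -⟩ := hrec A hA hApos
  have : Nonempty ι := ⟨i₀⟩
  obtain ⟨next, hnext⟩ := exists_isGreedyChoice hrec
  have hN : ∃ N, β < ∑ i ∈ range N, μ (piece e next A i) := by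
    have hlt := hβ.trans_le
      (ENNReal.div_le_of_le_mul' (hnext.measure_le_two_mul_tsum_piece he hrec hA hAfin))
    exact ((ENNReal.tendsto_nat_tsum _).eventually (lt_mem_nhds hlt)).exists
  have hgood (i : Fin (Nat.find hN)) :
      shift e next A i ∈ P ∧ 0 < μ (piece e next A i) :=
    hnext.shift_mem_and_measure_piece_pos hA hAfin
      (measure_residual_pos_of_sum_le he hβ (not_lt.1 (Nat.find_min hN i.isLt)))
  have hsum_image : ∑ i ∈ range (Nat.find hN), μ (e (shift e next A i) '' piece e next A i) =
      ∑ i ∈ range (Nat.find hN), μ (piece e next A i) := by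
    simp only [(he _).measure_image_equiv]
  refine ⟨Nat.find hN, fun i => piece e next A i, fun i => shift e next A i,
    fun i => measurableSet_piece hA i, fun i => (piece_subset_residual i).trans (residual_subset i),
    fun i => (hgood i).2, fun i j hij => pairwise_disjoint_piece (Fin.val_injective.ne hij),
    fun i => (hgood i).1, fun i => (image_piece_subset_residual i).trans (residual_subset i),
    fun i j hij => pairwise_disjoint_image_piece (Fin.val_injective.ne hij), ?_, ?_⟩
  · rw [measure_iUnion_fin_eq_sum_range pairwise_disjoint_piece (measurableSet_piece hA)]
    exact Nat.find_spec hN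
  · rw [measure_iUnion_fin_eq_sum_range (f := fun k => e (shift e next A k) '' piece e next A k)
      pairwise_disjoint_image_piece fun k => (e _).measurableSet_image.2 (measurableSet_piece hA k),
      hsum_image]
    exact Nat.find_spec hN

theorem recurrentDirection_sweepsOut_general
    {X : Type*} [MeasurableSpace X] (μ : Measure X)
    (T : ℤ × ℤ → X → X)
    (hmp : ∀ n, MeasurePreserving (T n) μ μ)
    (hadd : ∀ m n x, T (m + n) x = T m (T n x)) (hzero : ∀ x, T 0 x = x)
    (θ : ℝ)
    (hθ : RecurrentDirection μ T θ) :
    ∀ A : Set X, MeasurableSet A → 0 < μ A → μ A < ⊤ →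
      ∀ ε : ℝ, 0 < ε → SweepsOut μ T θ ε A := by
  intro A hA hApos hAfin ε hε α _ hα
  set e := actionEquiv T (fun n => (hmp n).measurable) hadd hzero
  have hrec : RecurrentAlong μ e {n | InTunnel θ ε (toR n)} := fun B hB hBpos =>
    let ⟨n, _, hn, hpos⟩ := hθ ε hε B hB hBpos
    ⟨n, hn, hpos⟩
  exact hrec.exists_disjoint_returns hmp hA hAfin.ne
    (ENNReal.ofReal_mul_lt_div_two hα hApos.ne' hAfin.ne)

/-- A recurrent direction is uniform sweeping out for every set of finite positive measure. -/
theorem recurrentDirection_sweepsOut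
    {X : Type*} [MeasurableSpace X] (μ : Measure X) [SigmaFinite μ]
    (T : ℤ × ℤ → X → X)
    (hmp : ∀ n, MeasurePreserving (T n) μ μ)
    (hadd : ∀ m n x, T (m + n) x = T m (T n x)) (hzero : ∀ x, T 0 x = x)
    (hinf : μ Set.univ = ⊤) (herg : IsErgodicAction μ T)
    (hrec : IsRecurrentAction μ T)
    (θ : ℝ) (hθ0 : 0 ≤ θ) (hθπ : θ < Real.pi)
    (hθ : RecurrentDirection μ T θ) :
    ∀ A : Set X, MeasurableSet A → 0 < μ A → μ A < ⊤ →
      ∀ ε : ℝ, 0 < ε → SweepsOut μ T θ ε A :=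
  recurrentDirection_sweepsOut_general μ T hmp hadd hzero θ hθ
end
end

section
/- Let (X, μ, T) be a rank one measure preserving Z²-action with associated towers {τ_i}, and let I be a level of the tower τ_i. Then for u ∈ Z², T^u I ∩ I ≠ ∅ (as a positive-measure intersection) if and only if u is a time of strong recurrence for the tower τ_i, i.e., u maps the base of one slice of τ_i inside some later tower τ_{i+j} to the base of another slice of τ_i in τ_{i+j}. -/
open MeasureTheory

noncomputable section

/-- `v` lies in the square `B_m = [0,m)² ∩ ℤ²`. -/
def inB (m : ℕ) (v : ℤ × ℤ) : Prop :=
  0 ≤ v.1 ∧ v.1 < (m : ℤ) ∧ 0 ≤ v.2 ∧ v.2 < (m : ℤ)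

/-- A cutting-and-stacking (rank one) structure for a measure preserving `ℤ²`-action `T`:
a sequence of towers `τ_i` with levels `I i v` indexed by `B_{n i}`, on which `T` acts by
translating indices, each tower `τ_{i+1}` being built from at least two slices of `τ_i`
(placed with base points `pos i 1`), and more generally with `pos i j` recording the base
points of the slices of `τ_i` inside `τ_{i+j}`. -/
structure CutStack {X : Type*} [MeasurableSpace X]
    (μ : Measure X) (T : ℤ × ℤ → X → X) where
  n : ℕ → ℕ
  I : ℕ → ℤ × ℤ → Set X
  pos : ℕ → ℕ → Finset (ℤ × ℤ)
  n_mono : StrictMono n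
  meas : ∀ i v, MeasurableSet (I i v)
  disj : ∀ i, ∀ v w : ℤ × ℤ, v ≠ w → Disjoint (I i v) (I i w)
  eqmeas : ∀ i, ∀ v w : ℤ × ℤ, inB (n i) v → inB (n i) w → μ (I i v) = μ (I i w)
  base_pos : ∀ i, 0 < μ (I i 0)
  base_fin : ∀ i, μ (I i 0) < ⊤
  meas_to_zero : Filter.Tendsto (fun i => μ (I i 0)) Filter.atTop (nhds 0)
  translate : ∀ i, ∀ v w : ℤ × ℤ, inB (n i) v → inB (n i) (v + w) →
    ∀ x ∈ I i v, T w x ∈ I i (v + w)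
  pos_inB : ∀ i j, ∀ p ∈ pos i j, ∀ v : ℤ × ℤ, inB (n i) v → inB (n (i + j)) (p + v)
  slice_sub : ∀ i j, 1 ≤ j → ∀ p ∈ pos i j, ∀ v : ℤ × ℤ, inB (n i) v →
    I (i + j) (p + v) ⊆ I i v
  slice_cover : ∀ i j, 1 ≤ j → ∀ v : ℤ × ℤ, inB (n i) v →
    I i v ⊆ ⋃ p ∈ pos i j, I (i + j) (p + v)
  num_slices : ∀ i, 2 ≤ (pos i 1).card

/-- `u` is a time of strong recurrence for the tower `τ_i`: for some `j ≥ 1`, `u` is the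
difference of the base points of two slices of `τ_i` inside `τ_{i+j}`. -/
def StrongRecTime {X : Type*} [MeasurableSpace X] {μ : Measure X}
    {T : ℤ × ℤ → X → X} (C : CutStack μ T) (i : ℕ) (u : ℤ × ℤ) : Prop :=
  ∃ j, 1 ≤ j ∧ ∃ p ∈ C.pos i j, ∃ q ∈ C.pos i j, u = q - p

/-!
If `u = q - p` for slices `p, q` of `τ_i` in `τ_{i+j}`, then `T^u` carries the level `p + v`
of `τ_{i+j}`, a piece of `I` of positive measure, into `I`. Conversely, if `u` is no such
difference, a point `x ∈ I ∩ T^{-u} I` lies in levels `p + v`, `q + v` of every later tower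
`τ_k` with `q + v ≠ p + v + u`, so translating inside `τ_k` must fail: in one of the two
coordinate directions, the level of `x` leaves `τ_k` when shifted by `u` and that of `T^u x`
when shifted by `-u`. This propagates down the towers, so one direction serves for all `k`.
Along it the two families of levels hug opposite edges of the towers. A slice of `τ_k` in
`τ_{k+1}` overhangs at most one edge, so if `a` and `b` slices overhang the two edges then
`4ab ≤ (a + b)² ≤ c²`, where `c` is the number of slices; hence the product of the measures of
the two sets of points shrinks by a factor `4` at each stage and `I ∩ T^{-u} I` is null.
-/

open scoped Pointwise ENNReal

theorem inB.pos {N : ℕ} {w : ℤ × ℤ} (hw : inB N w) : 0 < N := by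
  have := hw.1
  have := hw.2.1
  omega

theorem inB_zero {N : ℕ} (hN : 0 < N) : inB N 0 :=
  ⟨le_rfl, by simpa, le_rfl, by simpa⟩

theorem inB_corner {N : ℕ} (hN : 0 < N) : inB N ((N : ℤ) - 1, (N : ℤ) - 1) := by
  refine ⟨?_, ?_, ?_, ?_⟩ <;> simp <;> omega

def box (N : ℕ) : Finset (ℤ × ℤ) := Finset.Ico 0 (N : ℤ) ×ˢ Finset.Ico 0 (N : ℤ)

theorem mem_box {N : ℕ} {w : ℤ × ℤ} : w ∈ box N ↔ inB N w := by
  simp only [box, Finset.mem_product, Finset.mem_Ico, inB, and_assoc]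

theorem eq_zero_of_forall_four_pow_mul_le {x c : ℝ≥0∞} (hc : c ≠ ⊤)
    (h : ∀ K : ℕ, 4 ^ K * x ≤ c) : x = 0 := by
  by_contra hx
  obtain ⟨K, hK⟩ := ENNReal.exists_nat_mul_gt hx hc
  have hK4 : (K : ℝ≥0∞) ≤ 4 ^ K := by exact_mod_cast (Nat.lt_pow_self (by norm_num)).le
  exact (hK.trans_le ((mul_le_mul_left hK4 x).trans (h K))).false

theorem forall_or_forall_of_antitone {P Q : ℕ → Prop} (hP : Antitone P) (hQ : Antitone Q)
    (h : ∀ k, P k ∨ Q k) : (∀ k, P k) ∨ ∀ k, Q k := by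
  by_contra! ⟨⟨k, hk⟩, ⟨l, hl⟩⟩
  rcases h (max k l) with hm | hm
  · exact hk (hP (le_max_left k l) hm)
  · exact hl (hQ (le_max_right k l) hm)

-- The monotone `π : ℤ × ℤ →+ ℤ` with `π (1, 1) = 1` are exactly the two coordinate
-- projections.
section CoordinateProjection

variable {π : ℤ × ℤ →+ ℤ}

theorem map_diag (hπ1 : π (1, 1) = 1) (c : ℤ) : π (c, c) = c := by
  have : ((c, c) : ℤ × ℤ) = c • (1, 1) := by ext <;> simp
  rw [this, map_zsmul, hπ1, smul_eq_mul, mul_one]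

theorem mem_Ico_of_inB (hπ : Monotone π) (hπ1 : π (1, 1) = 1) {N : ℕ} {w : ℤ × ℤ}
    (hw : inB N w) : π w ∈ Set.Ico 0 (N : ℤ) := by
  obtain ⟨h1, h2, h3, h4⟩ := hw
  have lo : π 0 ≤ π w := hπ ⟨h1, h3⟩
  have hi : π w ≤ π ((N : ℤ) - 1, (N : ℤ) - 1) := hπ ⟨by simp; omega, by simp; omega⟩
  rw [map_zero] at lo
  rw [map_diag hπ1] at hi
  exact ⟨lo, by omega⟩

end CoordinateProjection

namespace CutStack

variable {X : Type*} [MeasurableSpace X] {μ : Measure X} {T : ℤ × ℤ → X → X}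
  (C : CutStack μ T)

theorem eq_of_mem_level {k : ℕ} {w w' : ℤ × ℤ} {x : X} (hw : x ∈ C.I k w)
    (hw' : x ∈ C.I k w') : w = w' := by
  by_contra hne
  exact Set.disjoint_left.1 (C.disj k w w' hne) hw hw'

theorem measure_level {k : ℕ} {w : ℤ × ℤ} (hw : inB (C.n k) w) :
    μ (C.I k w) = μ (C.I k 0) :=
  C.eqmeas k w 0 hw (inB_zero hw.pos)

theorem measure_level_pos {k : ℕ} {w : ℤ × ℤ} (hw : inB (C.n k) w) : 0 < μ (C.I k w) := by
  rw [C.measure_level hw]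
  exact C.base_pos k

theorem exists_slice_mem {i j : ℕ} (hj : 1 ≤ j) {v : ℤ × ℤ} (hv : inB (C.n i) v) {x : X}
    (hx : x ∈ C.I i v) : ∃ p ∈ C.pos i j, x ∈ C.I (i + j) (p + v) := by
  simpa using C.slice_cover i j hj v hv hx

theorem exists_mem_level {i k : ℕ} (hik : i ≤ k) {v : ℤ × ℤ} (hv : inB (C.n i) v) {x : X}
    (hx : x ∈ C.I i v) : ∃ w, inB (C.n k) w ∧ x ∈ C.I k w := by
  obtain ⟨j, rfl⟩ := Nat.exists_eq_add_of_le hik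
  rcases j.eq_zero_or_pos with rfl | hj
  · exact ⟨v, hv, hx⟩
  · obtain ⟨p, hp, hxp⟩ := C.exists_slice_mem hj hv hx
    exact ⟨p + v, C.pos_inB i j p hp v hv, hxp⟩

theorem level_eq_biUnion_slices {k j : ℕ} (hj : 1 ≤ j) {w : ℤ × ℤ} (hw : inB (C.n k) w) :
    C.I k w = ⋃ p ∈ C.pos k j, C.I (k + j) (p + w) :=
  (C.slice_cover k j hj w hw).antisymm
    (Set.iUnion₂_subset fun p hp => C.slice_sub k j hj p hp w hw)

theorem measure_level_eq_card_mul {k j : ℕ} (hj : 1 ≤ j) {w : ℤ × ℤ} (hw : inB (C.n k) w) :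
    μ (C.I k w) = (C.pos k j).card * μ (C.I (k + j) 0) := by
  have hdisj : (C.pos k j : Set (ℤ × ℤ)).PairwiseDisjoint fun p => C.I (k + j) (p + w) :=
    fun p _ q _ hpq => C.disj _ _ _ fun h => hpq (add_right_cancel h)
  rw [C.level_eq_biUnion_slices hj hw, measure_biUnion_finset hdisj fun p _ => C.meas _ _,
    Finset.sum_congr rfl fun p hp => C.measure_level (C.pos_inB k j p hp w hw),
    Finset.sum_const, nsmul_eq_mul]

theorem slice_bounds {π : ℤ × ℤ →+ ℤ} (hπ : Monotone π) (hπ1 : π (1, 1) = 1) {k d : ℕ}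
    (hk : 0 < C.n k) {r : ℤ × ℤ} (hr : r ∈ C.pos k d) :
    0 ≤ π r ∧ π r + C.n k ≤ C.n (k + d) := by
  have lo := mem_Ico_of_inB hπ hπ1 (C.pos_inB k d r hr 0 (inB_zero hk))
  have hi := mem_Ico_of_inB hπ hπ1 (C.pos_inB k d r hr _ (inB_corner hk))
  rw [add_zero] at lo
  rw [map_add, map_diag hπ1, Set.mem_Ico] at hi
  exact ⟨lo.1, by omega⟩

theorem eq_of_slice_add_eq {k j : ℕ} (hj : 1 ≤ j) {r s w w' : ℤ × ℤ} (hr : r ∈ C.pos k j)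
    (hs : s ∈ C.pos k j) (hw : inB (C.n k) w) (hw' : inB (C.n k) w') (h : r + w = s + w') :
    w = w' := by
  obtain ⟨x, hx⟩ := nonempty_of_measure_ne_zero
    (C.measure_level_pos (C.pos_inB k j r hr w hw)).ne'
  exact C.eq_of_mem_level (C.slice_sub k j hj r hr w hw hx)
    (C.slice_sub k j hj s hs w' hw' (h ▸ hx))

/-- Two distinct slices of `τ_k` sharing a point of `B_{n_{k+1}}` would force one level of
`τ_{k+1}` into two disjoint levels of `τ_k`. -/
theorem two_mul_n_le_n_succ {k : ℕ} (hk : 0 < C.n k) : 2 * C.n k ≤ C.n (k + 1) := by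
  obtain ⟨r, hr, s, hs, hrs⟩ := Finset.one_lt_card.1 (C.num_slices k)
  by_contra! hlt
  have hr1 := C.slice_bounds (π := .fst ℤ ℤ) (fun _ _ h => h.1) rfl hk hr
  have hr2 := C.slice_bounds (π := .snd ℤ ℤ) (fun _ _ h => h.2) rfl hk hr
  have hs1 := C.slice_bounds (π := .fst ℤ ℤ) (fun _ _ h => h.1) rfl hk hs
  have hs2 := C.slice_bounds (π := .snd ℤ ℤ) (fun _ _ h => h.2) rfl hk hs
  simp only [AddMonoidHom.coe_fst, AddMonoidHom.coe_snd] at hr1 hr2 hs1 hs2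
  set z : ℤ × ℤ := (max r.1 s.1, max r.2 s.2)
  have hzr : inB (C.n k) (z - r) := by refine ⟨?_, ?_, ?_, ?_⟩ <;> simp [z] <;> omega
  have hzs : inB (C.n k) (z - s) := by refine ⟨?_, ?_, ?_, ?_⟩ <;> simp [z] <;> omega
  have h := C.eq_of_slice_add_eq le_rfl hr hs hzr hzs (by abel)
  exact hrs (sub_right_injective h)

/-- Splitting `u = s + t`, both `x` and `T^u x` are carried inside `τ_k` to `T^s x`. -/
theorem eq_add_of_translate (hadd : ∀ m n x, T (m + n) x = T m (T n x)) {k : ℕ}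
    {w w' s t u : ℤ × ℤ} (hw : inB (C.n k) w) (hw' : inB (C.n k) w')
    (hws : inB (C.n k) (w + s)) (hwt : inB (C.n k) (w' + -t)) {x : X} (hx : x ∈ C.I k w)
    (hst : s + t = u) (hy : T u x ∈ C.I k w') : w' = w + u := by
  subst hst
  have h1 := C.translate k w s hw hws x hx
  have h2 := C.translate k w' (-t) hw' hwt _ hy
  rw [← hadd, neg_add_cancel_comm_assoc] at h2
  rw [← add_assoc, C.eq_of_mem_level h1 h2, neg_add_cancel_right]

theorem exits_of_ne_add (hadd : ∀ m n x, T (m + n) x = T m (T n x)) {k : ℕ}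
    {w w' u : ℤ × ℤ} (hw : inB (C.n k) w) (hw' : inB (C.n k) w') {x : X}
    (hx : x ∈ C.I k w) (hy : T u x ∈ C.I k w') (hne : w' ≠ w + u) :
    (w.1 + u.1 ∉ Set.Ico 0 (C.n k : ℤ) ∧ w'.1 + -u.1 ∉ Set.Ico 0 (C.n k : ℤ)) ∨
      (w.2 + u.2 ∉ Set.Ico 0 (C.n k : ℤ) ∧ w'.2 + -u.2 ∉ Set.Ico 0 (C.n k : ℤ)) := by
  have key : ∀ s t, s + t = u → inB (C.n k) (w + s) → inB (C.n k) (w' + -t) → False :=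
    fun s t hst hs ht => hne (C.eq_add_of_translate hadd hw hw' hs ht hx hst hy)
  by_contra h
  simp only [not_or, not_and_or, not_not, Set.mem_Ico] at h
  obtain ⟨⟨h1, h1'⟩ | ⟨h1, h1'⟩, ⟨h2, h2'⟩ | ⟨h2, h2'⟩⟩ := h
  · refine key u 0 (add_zero u) ?_ ?_ <;> simp [inB] at hw hw' ⊢ <;> omega
  · refine key (u.1, 0) (0, u.2) (by simp) ?_ ?_ <;> simp [inB] at hw hw' ⊢ <;> omega
  · refine key (0, u.2) (u.1, 0) (by simp) ?_ ?_ <;> simp [inB] at hw hw' ⊢ <;> omega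
  · refine key 0 u (zero_add u) ?_ ?_ <;> simp [inB] at hw hw' ⊢ <;> omega

theorem slice_subset_inter_preimage {i j : ℕ} (hj : 1 ≤ j) {v : ℤ × ℤ} (hv : inB (C.n i) v)
    {p q : ℤ × ℤ} (hp : p ∈ C.pos i j) (hq : q ∈ C.pos i j) :
    C.I (i + j) (p + v) ⊆ C.I i v ∩ T (q - p) ⁻¹' C.I i v := by
  intro x hx
  have he : p + v + (q - p) = q + v := by abel
  have hux := C.translate (i + j) (p + v) (q - p) (C.pos_inB i j p hp v hv)
    (he ▸ C.pos_inB i j q hq v hv) x hx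
  rw [he] at hux
  exact ⟨C.slice_sub i j hj p hp v hv hx, C.slice_sub i j hj q hq v hv hux⟩

def exitSet (π : ℤ × ℤ →+ ℤ) (a : ℤ) (k : ℕ) : Set X :=
  ⋃ (w) (_ : inB (C.n k) w) (_ : π w + a ∉ Set.Ico 0 (C.n k : ℤ)), C.I k w

theorem mem_exitSet {π : ℤ × ℤ →+ ℤ} {a : ℤ} {k : ℕ} {x : X} :
    x ∈ C.exitSet π a k ↔
      ∃ w, inB (C.n k) w ∧ π w + a ∉ Set.Ico 0 (C.n k : ℤ) ∧ x ∈ C.I k w := by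
  simp only [exitSet, Set.mem_iUnion, exists_prop]

theorem measurableSet_exitSet (π : ℤ × ℤ →+ ℤ) (a : ℤ) (k : ℕ) :
    MeasurableSet (C.exitSet π a k) :=
  .iUnion fun w => .iUnion fun _ => .iUnion fun _ => C.meas k w

/-- `τ_k` sits inside `τ_{k+d}` as a translate by a slice base point, so a level that stays
inside `τ_k` after the shift also stays inside `τ_{k+d}`. -/
theorem mem_exitSet_of_le {π : ℤ × ℤ →+ ℤ} (hπ : Monotone π) (hπ1 : π (1, 1) = 1) {a : ℤ}
    {k k' : ℕ} (hkk' : k ≤ k') {w : ℤ × ℤ} (hw : inB (C.n k) w) {x : X}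
    (hx : x ∈ C.I k w) (h : x ∈ C.exitSet π a k') : x ∈ C.exitSet π a k := by
  obtain ⟨d, rfl⟩ := Nat.exists_eq_add_of_le hkk'
  obtain ⟨w', -, hexit, hxw'⟩ := C.mem_exitSet.1 h
  refine C.mem_exitSet.2 ⟨w, hw, ?_, hx⟩
  rcases d.eq_zero_or_pos with rfl | hd
  · rwa [C.eq_of_mem_level hx hxw']
  · obtain ⟨r, hr, hxr⟩ := C.exists_slice_mem hd hw hx
    obtain rfl := C.eq_of_mem_level hxr hxw'
    have hrb := C.slice_bounds hπ hπ1 hw.pos hr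
    intro hmem
    apply hexit
    rw [map_add, Set.mem_Ico] at *
    omega

theorem antitone_mem_exitSet {π : ℤ × ℤ →+ ℤ} (hπ : Monotone π) (hπ1 : π (1, 1) = 1)
    (a : ℤ) {i k₀ : ℕ} (hik₀ : i ≤ k₀) {v : ℤ × ℤ} (hv : inB (C.n i) v) {x : X}
    (hx : x ∈ C.I i v) : Antitone fun K => x ∈ C.exitSet π a (k₀ + K) := by
  intro K K' hKK' h
  obtain ⟨w, hw, hxw⟩ := C.exists_mem_level (hik₀.trans (k₀.le_add_right K)) hv hx
  exact C.mem_exitSet_of_le hπ hπ1 (by omega) hw hxw h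

theorem mem_exitSet_fst_or_snd (hadd : ∀ m n x, T (m + n) x = T m (T n x)) {i : ℕ}
    {v u : ℤ × ℤ} (hv : inB (C.n i) v) (hrec : ¬ StrongRecTime C i u) {x : X}
    (hx : x ∈ C.I i v) (hux : T u x ∈ C.I i v) {k : ℕ} (hik : i < k) :
    (x ∈ C.exitSet (.fst ℤ ℤ) u.1 k ∧ T u x ∈ C.exitSet (.fst ℤ ℤ) (-u.1) k) ∨
      (x ∈ C.exitSet (.snd ℤ ℤ) u.2 k ∧ T u x ∈ C.exitSet (.snd ℤ ℤ) (-u.2) k) := by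
  obtain ⟨j, rfl⟩ := Nat.exists_eq_add_of_le hik.le
  obtain ⟨p, hp, hxp⟩ := C.exists_slice_mem (j := j) (by omega) hv hx
  obtain ⟨q, hq, huxq⟩ := C.exists_slice_mem (j := j) (by omega) hv hux
  have hpv := C.pos_inB i j p hp v hv
  have hqv := C.pos_inB i j q hq v hv
  have hne : q + v ≠ p + v + u := fun h => hrec ⟨j, by omega, p, hp, q, hq,
    eq_sub_of_add_eq' (add_right_cancel (h.trans (add_right_comm p v u))).symm⟩
  rcases C.exits_of_ne_add hadd hpv hqv hxp huxq hne with ⟨h1, h2⟩ | ⟨h1, h2⟩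
  · exact .inl ⟨C.mem_exitSet.2 ⟨_, hpv, h1, hxp⟩, C.mem_exitSet.2 ⟨_, hqv, h2, huxq⟩⟩
  · exact .inr ⟨C.mem_exitSet.2 ⟨_, hpv, h1, hxp⟩, C.mem_exitSet.2 ⟨_, hqv, h2, huxq⟩⟩

theorem forall_mem_exitSet_fst_or_snd (hadd : ∀ m n x, T (m + n) x = T m (T n x)) {i k₀ : ℕ}
    (hik₀ : i < k₀) {v u : ℤ × ℤ} (hv : inB (C.n i) v) (hrec : ¬ StrongRecTime C i u) {x : X}
    (hx : x ∈ C.I i v) (hux : T u x ∈ C.I i v) :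
    (∀ K, x ∈ C.exitSet (.fst ℤ ℤ) u.1 (k₀ + K) ∧
        T u x ∈ C.exitSet (.fst ℤ ℤ) (-u.1) (k₀ + K)) ∨
      ∀ K, x ∈ C.exitSet (.snd ℤ ℤ) u.2 (k₀ + K) ∧
        T u x ∈ C.exitSet (.snd ℤ ℤ) (-u.2) (k₀ + K) :=
  forall_or_forall_of_antitone
    ((C.antitone_mem_exitSet (fun _ _ h => h.1) rfl _ hik₀.le hv hx).inf
      (C.antitone_mem_exitSet (fun _ _ h => h.1) rfl _ hik₀.le hv hux))
    ((C.antitone_mem_exitSet (fun _ _ h => h.2) rfl _ hik₀.le hv hx).inf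
      (C.antitone_mem_exitSet (fun _ _ h => h.2) rfl _ hik₀.le hv hux))
    fun K => C.mem_exitSet_fst_or_snd hadd hv hrec hx hux (by omega)

/-- `r` overhangs when `[π r + a, π r + a + n_k)`, the `π`-shadow of the slice shifted by `a`,
is not contained in `[0, n_{k+1})`. -/
def overhangSlices (π : ℤ × ℤ →+ ℤ) (a : ℤ) (k : ℕ) : Finset (ℤ × ℤ) :=
  open Classical in
  (C.pos k 1).filter fun r => π r + a < 0 ∨ (C.n (k + 1) : ℤ) < π r + a + C.n k

theorem mem_overhangSlices {π : ℤ × ℤ →+ ℤ} {a : ℤ} {k : ℕ} {r : ℤ × ℤ} :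
    r ∈ C.overhangSlices π a k ↔
      r ∈ C.pos k 1 ∧ (π r + a < 0 ∨ (C.n (k + 1) : ℤ) < π r + a + C.n k) := by
  rw [overhangSlices, Finset.mem_filter]

/-- As `n_{k+1} ≥ 2 n_k ≥ 4 |a|`, overhanging by `a` and by `-a` happen at opposite edges. -/
theorem disjoint_overhangSlices {π : ℤ × ℤ →+ ℤ} (hπ : Monotone π) (hπ1 : π (1, 1) = 1)
    {a : ℤ} {k : ℕ} (hk : 0 < C.n k) (ha : 2 * a.natAbs ≤ C.n k) :
    Disjoint (C.overhangSlices π a k) (C.overhangSlices π (-a) k) := by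
  rw [Finset.disjoint_left]
  intro r hra hrb
  rw [mem_overhangSlices] at hra hrb
  have hr := C.slice_bounds hπ hπ1 hk hra.1
  have h2 := C.two_mul_n_le_n_succ hk
  omega

theorem four_mul_card_overhangSlices_le {π : ℤ × ℤ →+ ℤ} (hπ : Monotone π)
    (hπ1 : π (1, 1) = 1) {a : ℤ} {k : ℕ} (hk : 0 < C.n k) (ha : 2 * a.natAbs ≤ C.n k) :
    4 * ((C.overhangSlices π a k).card * (C.overhangSlices π (-a) k).card) ≤
      (C.pos k 1).card ^ 2 := by
  calc 4 * ((C.overhangSlices π a k).card * (C.overhangSlices π (-a) k).card)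
      _ ≤ ((C.overhangSlices π a k).card + (C.overhangSlices π (-a) k).card) ^ 2 := by
        rw [← mul_assoc]
        exact four_mul_le_sq_add _ _
      _ = (C.overhangSlices π a k ∪ C.overhangSlices π (-a) k).card ^ 2 := by
        rw [Finset.card_union_of_disjoint (C.disjoint_overhangSlices hπ hπ1 hk ha)]
      _ ≤ (C.pos k 1).card ^ 2 := by
        gcongr
        exact Finset.union_subset (Finset.filter_subset _ _) (Finset.filter_subset _ _)

def IsLevelCover (k : ℕ) (F : Finset (ℤ × ℤ)) (Y : Set X) : Prop :=
  (∀ w ∈ F, inB (C.n k) w) ∧ Y ⊆ ⋃ w ∈ F, C.I k w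

section LevelCover

variable {C}

theorem IsLevelCover.measure_le {k : ℕ} {F : Finset (ℤ × ℤ)} {Y : Set X}
    (h : C.IsLevelCover k F Y) : μ Y ≤ F.card * μ (C.I k 0) :=
  calc μ Y ≤ μ (⋃ w ∈ F, C.I k w) := measure_mono h.2
    _ ≤ ∑ w ∈ F, μ (C.I k w) := measure_biUnion_finset_le F _
    _ = ∑ _w ∈ F, μ (C.I k 0) := Finset.sum_congr rfl fun w hw => C.measure_level (h.1 w hw)
    _ = F.card * μ (C.I k 0) := by rw [Finset.sum_const, nsmul_eq_mul]

theorem isLevelCover_box {π : ℤ × ℤ →+ ℤ} {a : ℤ} {k : ℕ} {Y : Set X}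
    (hY : Y ⊆ C.exitSet π a k) : C.IsLevelCover k (box (C.n k)) Y := by
  refine ⟨fun w hw => mem_box.1 hw, fun y hy => ?_⟩
  obtain ⟨w, hw, -, hyw⟩ := C.mem_exitSet.1 (hY hy)
  exact Set.mem_biUnion (mem_box.2 hw) hyw

theorem IsLevelCover.overhangSlices_add {π : ℤ × ℤ →+ ℤ} (hπ : Monotone π) (hπ1 : π (1, 1) = 1)
    {a : ℤ} {k : ℕ} {F : Finset (ℤ × ℤ)} {Y : Set X} (h : C.IsLevelCover k F Y)
    (hY : Y ⊆ C.exitSet π a (k + 1)) :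
    C.IsLevelCover (k + 1) (C.overhangSlices π a k + F) Y := by
  constructor
  · intro w hw
    obtain ⟨r, hr, w', hw', rfl⟩ := Finset.mem_add.1 hw
    exact C.pos_inB k 1 r (C.mem_overhangSlices.1 hr).1 w' (h.1 w' hw')
  · intro y hy
    obtain ⟨w, hwF, hyw⟩ := Set.mem_iUnion₂.1 (h.2 hy)
    have hw := h.1 w hwF
    obtain ⟨r, hr, hyr⟩ := C.exists_slice_mem le_rfl hw hyw
    obtain ⟨w', -, hexit, hyw'⟩ := C.mem_exitSet.1 (hY hy)
    obtain rfl := C.eq_of_mem_level hyr hyw'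
    refine Set.mem_biUnion (Finset.add_mem_add (C.mem_overhangSlices.2 ⟨hr, ?_⟩) hwF) hyr
    have hπw := mem_Ico_of_inB hπ hπ1 hw
    rw [map_add, Set.mem_Ico] at hexit
    rw [Set.mem_Ico] at hπw
    omega

theorem four_mul_card_mul_card_le {π : ℤ × ℤ →+ ℤ} (hπ : Monotone π) (hπ1 : π (1, 1) = 1)
    {a : ℤ} {k : ℕ} (hk : 0 < C.n k) (ha : 2 * a.natAbs ≤ C.n k) (F G : Finset (ℤ × ℤ)) :
    4 * ((C.overhangSlices π a k + F).card * (C.overhangSlices π (-a) k + G).card *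
        μ (C.I (k + 1) 0) ^ 2) ≤ F.card * G.card * μ (C.I k 0) ^ 2 := by
  have hcard : 4 * ((C.overhangSlices π a k + F).card * (C.overhangSlices π (-a) k + G).card)
      ≤ F.card * G.card * (C.pos k 1).card ^ 2 :=
    calc _ ≤ 4 * ((C.overhangSlices π a k).card * F.card *
          ((C.overhangSlices π (-a) k).card * G.card)) := by
          gcongr <;> exact Finset.card_add_le
      _ = F.card * G.card *
          (4 * ((C.overhangSlices π a k).card * (C.overhangSlices π (-a) k).card)) := by ring
      _ ≤ F.card * G.card * (C.pos k 1).card ^ 2 := by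
          gcongr
          exact C.four_mul_card_overhangSlices_le hπ hπ1 hk ha
  rw [C.measure_level_eq_card_mul le_rfl (inB_zero hk)]
  calc _ = ((4 * ((C.overhangSlices π a k + F).card * (C.overhangSlices π (-a) k + G).card) :
          ℕ) : ℝ≥0∞) * μ (C.I (k + 1) 0) ^ 2 := by push_cast; ring
    _ ≤ ((F.card * G.card * (C.pos k 1).card ^ 2 : ℕ) : ℝ≥0∞) * μ (C.I (k + 1) 0) ^ 2 := by
        gcongr
    _ = _ := by push_cast; ring

end LevelCover

/-- Refining level covers of both sets through the overhanging slices, the product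
`#F * #G * μ(τ_k-level)²` drops by a factor `4` at each stage. -/
theorem measure_iInter_exitSet_mul_eq_zero {π : ℤ × ℤ →+ ℤ} (hπ : Monotone π)
    (hπ1 : π (1, 1) = 1) {a : ℤ} {k₀ : ℕ} (hk₀ : 0 < C.n k₀) (ha : 2 * a.natAbs ≤ C.n k₀) :
    μ (⋂ K, C.exitSet π a (k₀ + K)) * μ (⋂ K, C.exitSet π (-a) (k₀ + K)) = 0 := by
  set Y := ⋂ K, C.exitSet π a (k₀ + K)
  set Z := ⋂ K, C.exitSet π (-a) (k₀ + K)
  set Φ₀ := ((box (C.n k₀)).card * (box (C.n k₀)).card * μ (C.I k₀ 0) ^ 2 : ℝ≥0∞)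
  have hn : ∀ K, 0 < C.n (k₀ + K) ∧ 2 * a.natAbs ≤ C.n (k₀ + K) := fun K =>
    have := C.n_mono.monotone (k₀.le_add_right K)
    ⟨by omega, by omega⟩
  have hcover : ∀ K, ∃ F G, C.IsLevelCover (k₀ + K) F Y ∧ C.IsLevelCover (k₀ + K) G Z ∧
      4 ^ K * (F.card * G.card * μ (C.I (k₀ + K) 0) ^ 2) ≤ Φ₀ := by
    intro K
    induction K with
    | zero =>
      exact ⟨_, _, isLevelCover_box (Set.iInter_subset _ 0),
        isLevelCover_box (Set.iInter_subset _ 0), by simp [Φ₀]⟩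
    | succ K ih =>
      obtain ⟨F, G, hF, hG, hΦ⟩ := ih
      refine ⟨_, _, hF.overhangSlices_add hπ hπ1 (Set.iInter_subset _ (K + 1)),
        hG.overhangSlices_add hπ hπ1 (Set.iInter_subset _ (K + 1)), ?_⟩
      calc _ = 4 ^ K * (4 * ((C.overhangSlices π a (k₀ + K) + F).card *
            (C.overhangSlices π (-a) (k₀ + K) + G).card * μ (C.I (k₀ + K + 1) 0) ^ 2)) := by
            rw [pow_succ, mul_assoc]; rfl
        _ ≤ 4 ^ K * (F.card * G.card * μ (C.I (k₀ + K) 0) ^ 2) :=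
            mul_le_mul_right (C.four_mul_card_mul_card_le hπ hπ1 (hn K).1 (hn K).2 F G) _
        _ ≤ Φ₀ := hΦ
  have hΦ₀ : Φ₀ ≠ ⊤ := by
    have := C.base_fin k₀
    simp only [Φ₀]
    finiteness
  refine eq_zero_of_forall_four_pow_mul_le hΦ₀ fun K => ?_
  obtain ⟨F, G, hF, hG, hΦ⟩ := hcover K
  calc 4 ^ K * (μ Y * μ Z)
      _ ≤ 4 ^ K * (F.card * μ (C.I (k₀ + K) 0) * (G.card * μ (C.I (k₀ + K) 0))) := by
        gcongr
        exacts [hF.measure_le, hG.measure_le]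
      _ = 4 ^ K * (F.card * G.card * μ (C.I (k₀ + K) 0) ^ 2) := by ring
      _ ≤ Φ₀ := hΦ

theorem measure_eq_zero_of_forall_exitSet {u : ℤ × ℤ} (hu : MeasurePreserving (T u) μ μ)
    {π : ℤ × ℤ →+ ℤ} (hπ : Monotone π) (hπ1 : π (1, 1) = 1) {a : ℤ} {k₀ : ℕ}
    (hk₀ : 0 < C.n k₀) (ha : 2 * a.natAbs ≤ C.n k₀) {S : Set X}
    (hS : ∀ x ∈ S, ∀ K, x ∈ C.exitSet π a (k₀ + K) ∧ T u x ∈ C.exitSet π (-a) (k₀ + K)) :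
    μ S = 0 := by
  have hZ : MeasurableSet (⋂ K, C.exitSet π (-a) (k₀ + K)) :=
    .iInter fun K => C.measurableSet_exitSet π (-a) (k₀ + K)
  refine mul_self_eq_zero.1 (le_antisymm ?_ zero_le)
  calc μ S * μ S
      _ ≤ μ (⋂ K, C.exitSet π a (k₀ + K)) * μ (T u ⁻¹' ⋂ K, C.exitSet π (-a) (k₀ + K)) := by
        gcongr
        exacts [fun x hx => Set.mem_iInter.2 fun K => (hS x hx K).1,
          fun x hx => Set.mem_iInter.2 fun K => (hS x hx K).2]
      _ = 0 := by
        rw [hu.measure_preimage hZ.nullMeasurableSet,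
          C.measure_iInter_exitSet_mul_eq_zero hπ hπ1 hk₀ ha]

end CutStack

theorem level_return_iff_strongRecTime_general
    {X : Type*} [MeasurableSpace X] (μ : Measure X)
    (T : ℤ × ℤ → X → X)
    (hmp : ∀ n, MeasurePreserving (T n) μ μ)
    (hadd : ∀ m n x, T (m + n) x = T m (T n x))
    (C : CutStack μ T)
    (i : ℕ) (v : ℤ × ℤ) (hv : inB (C.n i) v) (u : ℤ × ℤ) :
    0 < μ (C.I i v ∩ T u ⁻¹' C.I i v) ↔ StrongRecTime C i u := by
  constructor
  · intro hA
    by_contra hrec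
    set k₀ := i + 1 + 2 * (u.1.natAbs + u.2.natAbs)
    have hk₀ : k₀ ≤ C.n k₀ := C.n_mono.le_apply
    have hsplit : ∀ x ∈ C.I i v ∩ T u ⁻¹' C.I i v,
        (∀ K, x ∈ C.exitSet (.fst ℤ ℤ) u.1 (k₀ + K) ∧
          T u x ∈ C.exitSet (.fst ℤ ℤ) (-u.1) (k₀ + K)) ∨
        (∀ K, x ∈ C.exitSet (.snd ℤ ℤ) u.2 (k₀ + K) ∧
          T u x ∈ C.exitSet (.snd ℤ ℤ) (-u.2) (k₀ + K)) :=
      fun x hx => C.forall_mem_exitSet_fst_or_snd hadd (by omega) hv hrec hx.1 hx.2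
    have hfst := C.measure_eq_zero_of_forall_exitSet (hmp u) (π := .fst ℤ ℤ)
      (fun _ _ h => h.1) rfl (a := u.1) (show 0 < C.n k₀ by omega) (by omega)
      (S := {x | ∀ K, _}) fun _ hx => hx
    have hsnd := C.measure_eq_zero_of_forall_exitSet (hmp u) (π := .snd ℤ ℤ)
      (fun _ _ h => h.2) rfl (a := u.2) (show 0 < C.n k₀ by omega) (by omega)
      (S := {x | ∀ K, _}) fun _ hx => hx
    exact hA.ne' (measure_mono_null hsplit (measure_union_null hfst hsnd))
  · rintro ⟨j, hj, p, hp, q, hq, rfl⟩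
    exact (C.measure_level_pos (C.pos_inB i j p hp v hv)).trans_le
      (measure_mono (C.slice_subset_inter_preimage hj hv hp hq))

/-- A level `I` of the tower `τ_i` meets `T^u I` in positive measure if and only if `u` is a
time of strong recurrence for `τ_i`. -/
theorem level_return_iff_strongRecTime
    {X : Type*} [MeasurableSpace X] (μ : Measure X)
    (T : ℤ × ℤ → X → X)
    (hmp : ∀ n, MeasurePreserving (T n) μ μ)
    (hadd : ∀ m n x, T (m + n) x = T m (T n x)) (hzero : ∀ x, T 0 x = x)
    (C : CutStack μ T)
    (i : ℕ) (v : ℤ × ℤ) (hv : inB (C.n i) v) (u : ℤ × ℤ) :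
    0 < μ (C.I i v ∩ T u ⁻¹' C.I i v) ↔ StrongRecTime C i u :=
  level_return_iff_strongRecTime_general μ T hmp hadd C i v hv u
end
end

section
/- There exists an infinite measure preserving, recurrent, ergodic Z²-action (X, μ, T) on a σ-finite Lebesgue space such that for every nonzero n ∈ Z², the Z-action (X, μ, {T^{kn}}_{k∈Z}) is not recurrent. -/
open MeasureTheory

noncomputable section

variable {X : Type*} [MeasurableSpace X]

/-
The space is `ℝ` with Lebesgue measure, and `u ∈ ℤ²` acts by translation by `u₁√2 + u₂`.
Since `√2` is irrational these translation lengths are nonzero for `u ≠ 0` and form a dense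
subgroup of `ℝ`. Density makes the action recurrent and ergodic: near Lebesgue density
points a set and its translates by small elements of the subgroup overlap in positive measure.
A single direction `n ≠ 0`, however, only translates by the discrete set `ℤ γ`, `γ ≠ 0`,
which moves an interval shorter than `|γ|` off itself.
-/

open Metric Filter Set Topology

def latticeHom (α : ℝ) : ℤ × ℤ →+ ℝ where
  toFun u := u.1 * α + u.2
  map_zero' := by simp
  map_add' u v := by simp only [Prod.fst_add, Prod.snd_add]; push_cast; ring

@[simp]
lemma latticeHom_apply (α : ℝ) (u : ℤ × ℤ) : latticeHom α u = u.1 * α + u.2 := rfl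

lemma latticeHom_injective {α : ℝ} (hα : Irrational α) :
    Function.Injective (latticeHom α) := by
  refine (injective_iff_map_eq_zero _).2 fun u hu => ?_
  rw [latticeHom_apply] at hu
  by_cases h₁ : u.1 = 0
  · simp_all [Prod.ext_iff]
  · exact absurd hu ((hα.intCast_mul h₁).add_intCast u.2).ne_zero

lemma dense_range_latticeHom {α : ℝ} (hα : Irrational α) : Dense (range (latticeHom α)) := by
  have hd : Dense (AddSubgroup.closure {α, 1} : Set ℝ) :=
    dense_addSubgroupClosure_pair_iff.2 (by rwa [div_one])
  refine hd.mono ?_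
  rintro x hx
  obtain ⟨m, n, rfl⟩ := AddSubgroup.mem_closure_pair.1 hx
  exact ⟨(m, n), by simp⟩

lemma exists_eventually_ofReal_lt_volume_inter_closedBall {S : Set ℝ} (hS : 0 < volume S) :
    ∃ x : ℝ, ∀ᶠ r in 𝓝[>] 0, ENNReal.ofReal (3 / 2 * r) < volume (S ∩ closedBall x r) := by
  have hne : (ae (volume.restrict S)).NeBot := by
    rwa [ae_neBot, ne_eq, Measure.restrict_eq_zero, ← ne_eq, ← pos_iff_ne_zero]
  obtain ⟨x, hx⟩ := (Besicovitch.ae_tendsto_measure_inter_div volume S).exists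
  refine ⟨x, ?_⟩
  have h34 : ENNReal.ofReal (3 / 4) < 1 := ENNReal.ofReal_lt_one.2 (by norm_num)
  filter_upwards [hx.eventually (lt_mem_nhds h34), self_mem_nhdsWithin] with r hr (hr0 : 0 < r)
  rw [Real.volume_closedBall, ENNReal.lt_div_iff_mul_lt (by simp [hr0]) (by simp),
    ← ENNReal.ofReal_mul (by norm_num)] at hr
  convert hr using 2
  ring

/-- Both balls lie in a ball of length `5r/2`, less than the `3r` the two pieces would need if
they were disjoint. -/
lemma volume_inter_pos_of_ofReal_lt_volume_inter_closedBall {S₁ S₂ : Set ℝ}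
    (h₂ : MeasurableSet S₂) {x₁ x₂ r : ℝ} (hr : 0 < r) (hd : dist x₂ x₁ ≤ r / 4)
    (hS₁ : ENNReal.ofReal (3 / 2 * r) < volume (S₁ ∩ closedBall x₁ r))
    (hS₂ : ENNReal.ofReal (3 / 2 * r) < volume (S₂ ∩ closedBall x₂ r)) :
    0 < volume (S₁ ∩ S₂) := by
  by_contra! h
  have hdisj : AEDisjoint volume (S₁ ∩ closedBall x₁ r) (S₂ ∩ closedBall x₂ r) :=
    measure_mono_null (inter_subset_inter inter_subset_left inter_subset_left)
      (nonpos_iff_eq_zero.1 h)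
  have hunion : volume (S₁ ∩ closedBall x₁ r) + volume (S₂ ∩ closedBall x₂ r)
      ≤ ENNReal.ofReal (2 * (r + r / 4)) := by
    rw [← measure_union₀ (h₂.inter measurableSet_closedBall).nullMeasurableSet hdisj,
      ← Real.volume_closedBall x₁]
    exact measure_mono (union_subset
      (inter_subset_right.trans (closedBall_subset_closedBall (by linarith)))
      (inter_subset_right.trans (closedBall_subset_closedBall' (by linarith))))
  have hlt := (ENNReal.add_lt_add hS₁ hS₂).trans_le hunion
  rw [← ENNReal.ofReal_add (by positivity) (by positivity),
    ENNReal.ofReal_lt_ofReal_iff (by positivity)] at hlt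
  linarith

lemma eventually_volume_inter_preimage_add_pos {A B : Set ℝ} (hB : MeasurableSet B) {a b : ℝ}
    (ha : ∀ᶠ r in 𝓝[>] 0, ENNReal.ofReal (3 / 2 * r) < volume (A ∩ closedBall a r))
    (hb : ∀ᶠ r in 𝓝[>] 0, ENNReal.ofReal (3 / 2 * r) < volume (B ∩ closedBall b r)) :
    ∀ᶠ t in 𝓝 (b - a), 0 < volume (A ∩ (· + t) ⁻¹' B) := by
  obtain ⟨r, hra, hrb, hr : 0 < r⟩ := (ha.and (hb.and self_mem_nhdsWithin)).exists
  filter_upwards [closedBall_mem_nhds (b - a) (by positivity : 0 < r / 4)] with t ht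
  have hshift :
      volume ((· + t) ⁻¹' B ∩ closedBall (b - t) r) = volume (B ∩ closedBall b r) := by
    rw [← preimage_add_right_closedBall, ← preimage_inter, measure_preimage_add_right]
  refine volume_inter_pos_of_ofReal_lt_volume_inter_closedBall
    (hB.preimage (measurable_add_const t)) hr ?_ hra (hshift ▸ hrb)
  rw [mem_closedBall, Real.dist_eq] at ht
  rw [Real.dist_eq, show b - t - a = -(t - (b - a)) by ring, abs_neg]
  exact ht

lemma volume_eq_zero_or_volume_compl_eq_zero_of_dense {D : Set ℝ} (hD : Dense D) {A : Set ℝ}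
    (hA : MeasurableSet A) (hinv : ∀ t ∈ D, (· + t) ⁻¹' A = A) :
    volume A = 0 ∨ volume Aᶜ = 0 := by
  by_contra! h
  obtain ⟨a, ha⟩ := exists_eventually_ofReal_lt_volume_inter_closedBall (pos_iff_ne_zero.2 h.1)
  obtain ⟨b, hb⟩ := exists_eventually_ofReal_lt_volume_inter_closedBall (pos_iff_ne_zero.2 h.2)
  obtain ⟨t, htD, hpos⟩ := ((mem_closure_iff_frequently.1 (hD (b - a))).and_eventually
    (eventually_volume_inter_preimage_add_pos hA.compl ha hb)).exists
  rw [preimage_compl, hinv t htD, inter_compl_self, measure_empty] at hpos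
  exact lt_irrefl 0 hpos

lemma exists_mem_ne_zero_volume_inter_preimage_add_pos {D : Set ℝ} (hD : Dense D) {A : Set ℝ}
    (hA : MeasurableSet A) (hpos : 0 < volume A) :
    ∃ t ∈ D, t ≠ 0 ∧ 0 < volume (A ∩ (· + t) ⁻¹' A) := by
  obtain ⟨a, ha⟩ := exists_eventually_ofReal_lt_volume_inter_closedBall hpos
  have hev := eventually_volume_inter_preimage_add_pos hA ha ha
  rw [sub_self] at hev
  obtain ⟨t, ⟨htD, ht0⟩, ht⟩ :=
    ((mem_closure_iff_frequently.1 (hD.sdiff_singleton 0 0)).and_eventually hev).exists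
  exact ⟨t, htD, ht0, ht⟩

lemma Ioo_inter_preimage_add_eq_empty {c t : ℝ} (h : c ≤ |t|) :
    Ioo 0 c ∩ (· + t) ⁻¹' Ioo 0 c = ∅ := by
  refine eq_empty_of_forall_notMem fun x ⟨⟨hx₀, hxc⟩, hxt₀, hxtc⟩ => ?_
  rcases abs_cases t with ⟨ht, -⟩ | ⟨ht, -⟩ <;> linarith

lemma not_forall_exists_zmultiple_volume_inter_preimage_add_pos {γ : ℝ} (hγ : γ ≠ 0) :
    ¬ ∀ A : Set ℝ, MeasurableSet A → 0 < volume A →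
      ∃ k : ℤ, k ≠ 0 ∧ 0 < volume (A ∩ (· + k * γ) ⁻¹' A) := by
  intro h
  obtain ⟨k, hk, hpos⟩ := h (Ioo 0 |γ|) measurableSet_Ioo (by simp [hγ])
  have hle : |γ| ≤ |k * γ| := by
    rw [abs_mul]
    exact le_mul_of_one_le_left (abs_nonneg γ) (by exact_mod_cast Int.one_le_abs hk)
  rw [Ioo_inter_preimage_add_eq_empty hle, measure_empty] at hpos
  exact lt_irrefl 0 hpos

/-- There is an infinite measure preserving, recurrent, ergodic `ℤ²`-action on a σ-finite
space none of whose `ℤ` sub-actions is recurrent. -/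
theorem exists_recurrent_action_no_recurrent_subaction :
    ∃ (X : Type) (_ : MeasurableSpace X) (μ : Measure X) (T : ℤ × ℤ → X → X),
      (∀ n, MeasurePreserving (T n) μ μ) ∧
      (∀ m n x, T (m + n) x = T m (T n x)) ∧ (∀ x, T 0 x = x) ∧
      SigmaFinite μ ∧ μ Set.univ = ⊤ ∧
      IsErgodicAction μ T ∧ IsRecurrentAction μ T ∧
      ∀ n : ℤ × ℤ, n ≠ 0 →
        ¬ (∀ A : Set X, MeasurableSet A → 0 < μ A →
            ∃ k : ℤ, k ≠ 0 ∧ 0 < μ (A ∩ T (k * n.1, k * n.2) ⁻¹' A)) := by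
  have hα : Irrational √2 := irrational_sqrt_two
  have hD := dense_range_latticeHom hα
  refine ⟨ℝ, inferInstance, volume, fun u x => x + latticeHom √2 u,
    fun n => measurePreserving_add_right volume _, fun m n x => by simp only [map_add]; ring,
    fun x => by simp, inferInstance, Real.volume_univ, ?_, ?_, ?_⟩
  · intro A hA hinv
    exact volume_eq_zero_or_volume_compl_eq_zero_of_dense hD hA
      (by rintro _ ⟨u, rfl⟩; exact hinv u)
  · intro A hA hpos
    obtain ⟨_, ⟨u, rfl⟩, hu, hpos⟩ :=
      exists_mem_ne_zero_volume_inter_preimage_add_pos hD hA hpos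
    exact ⟨u, by rintro rfl; exact hu (map_zero _), hpos⟩
  · intro n hn
    have hsmul (k : ℤ) : latticeHom √2 (k * n.1, k * n.2) = k * latticeHom √2 n := by
      simp only [latticeHom_apply]; push_cast; ring
    simpa only [hsmul] using not_forall_exists_zmultiple_volume_inter_preimage_add_pos
      ((map_ne_zero_iff _ (latticeHom_injective hα)).2 hn)
end
end

section
/- Let (X, μ, T) be a measure preserving Z²-action on a σ-finite space, A a measurable set with 0 < μ(A) < ∞, ε > 0, and θ a direction such that for every measurable B ⊆ A with μ(B) > 0 there is n ∈ Z² in the ε-tunnel of θ with μ(B ∩ T^n B) > 0. Then there exist countably many pairwise disjoint positive-measure sets A₁, A₂, … ⊆ A and vectors v₁, v₂, … in the ε-tunnel of θ such that the sets T^{vᵢ}Aᵢ are subsets of A, the collection {Aᵢ} ∪ {T^{vᵢ}Aᵢ} need not be disjoint overall but satisfies μ(∪ᵢ (Aᵢ ∪ T^{vᵢ}Aᵢ)) = μ(A), and consequently 2·Σᵢ μ(Aᵢ) ≥ μ(A). -/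
open MeasureTheory

noncomputable section

variable {X : Type*} [MeasurableSpace X]

/-!
Zorn's lemma gives a maximal family of pairwise disjoint sets `C ∪ T v '' C ⊆ A` of positive
measure, with `C` measurable and `v ≠ 0` in the `ε`-tunnel; in a σ-finite space such a family is
countable. If its union missed a positive-measure part `B` of `A`, recurrence would give `w` with
`C = B ∩ T w ⁻¹' B` of positive measure, and `C ∪ T w '' C ⊆ B` could be added to the family.
Hence the union has full measure in `A`, and `μ (C ∪ T v '' C) ≤ 2 * μ C` gives the bound.
-/

namespace MeasureTheory

section Exhaustion

variable {ι : Type*} {μ : Measure X} {s : ι → Set X} {S : Set ι} {A : Set X} {I : Set ι}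

def IsPacking (μ : Measure X) (s : ι → Set X) (S : Set ι) (A : Set X) (I : Set ι) : Prop :=
  I ⊆ S ∧ I.PairwiseDisjoint s ∧ ∀ i ∈ I, s i ⊆ A ∧ 0 < μ (s i)

theorem IsPacking.countable [SFinite μ] (hI : IsPacking μ s S A I)
    (hS : ∀ i ∈ S, MeasurableSet (s i)) : I.Countable := by
  have hpos : {i : I | 0 < μ (s i)}.Countable :=
    Measure.countable_meas_pos_of_disjoint_iUnion (fun i => hS i (hI.1 i.2))
      fun i j hij => hI.2.1 i.2 j.2 (Subtype.coe_ne_coe.2 hij)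
  rw [Set.eq_univ_of_forall (s := {i : I | 0 < μ (s i)}) fun i => (hI.2.2 i i.2).2,
    Set.countable_univ_iff] at hpos
  exact Set.countable_coe_iff.1 hpos

theorem exists_maximal_isPacking : ∃ I, Maximal (IsPacking μ s S A) I := by
  refine zorn_subset _ fun c hcP hc =>
    ⟨⋃₀ c, ⟨?_, ?_, ?_⟩, fun I hI => Set.subset_sUnion_of_mem hI⟩
  · exact Set.sUnion_subset fun I hI => (hcP hI).1
  · exact (Set.pairwiseDisjoint_sUnion hc.directedOn).2 fun I hI => (hcP hI).2.1
  · rintro i ⟨I, hI, hi⟩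
    exact (hcP hI).2.2 i hi

theorem exists_countable_isPacking_biUnion_ae_eq [SFinite μ] (hA : MeasurableSet A)
    (hS : ∀ i ∈ S, MeasurableSet (s i))
    (h : ∀ B ⊆ A, MeasurableSet B → 0 < μ B → ∃ i ∈ S, s i ⊆ B ∧ 0 < μ (s i)) :
    ∃ I, IsPacking μ s S A I ∧ I.Countable ∧ (⋃ i ∈ I, s i) =ᵐ[μ] A := by
  obtain ⟨I, hI⟩ := exists_maximal_isPacking (μ := μ) (s := s) (S := S) (A := A)
  have hIc : I.Countable := hI.prop.countable hS
  set U := ⋃ i ∈ I, s i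
  have hUA : U ⊆ A := Set.iUnion₂_subset fun i hi => (hI.prop.2.2 i hi).1
  refine ⟨I, hI.prop, hIc, hUA.eventuallyLE.antisymm (ae_le_set.2 ?_)⟩
  by_contra hnull
  obtain ⟨j, hjS, hjU, hjpos⟩ := h (A \ U) Set.sdiff_subset
    (hA.diff (.biUnion hIc fun i hi => hS i (hI.prop.1 hi))) (pos_iff_ne_zero.2 hnull)
  have hdisj : ∀ i ∈ I, Disjoint (s j) (s i) := fun i hi =>
    Set.disjoint_of_subset_left hjU
      (Set.disjoint_sdiff_left.mono_right (Set.subset_biUnion_of_mem hi))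
  have hjI : j ∉ I := fun hj => hjpos.ne' (measure_mono_null
    (Set.subset_inter hjU (Set.subset_biUnion_of_mem hj))
    (by rw [Set.sdiff_inter_self, measure_empty]))
  have hins : IsPacking μ s S A (insert j I) :=
    ⟨Set.insert_subset hjS hI.prop.1, hI.prop.2.1.insert_of_notMem hjI hdisj,
      Set.forall_mem_insert.2 ⟨⟨hjU.trans Set.sdiff_subset, hjpos⟩, hI.prop.2.2⟩⟩
  exact hjI (hI.2 hins (Set.subset_insert j I) (Set.mem_insert j I))

end Exhaustion

section Action

variable {G : Type*} [AddGroup G]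

theorem image_eq_preimage_neg {Y : Type*} {T : G → Y → Y}
    (hadd : ∀ m n x, T (m + n) x = T m (T n x)) (hzero : ∀ x, T 0 x = x) (v : G) (C : Set Y) :
    T v '' C = T (-v) ⁻¹' C := by
  refine congrFun (Set.image_eq_preimage_of_inverse (fun x => ?_) fun x => ?_) C
  · rw [← hadd, neg_add_cancel, hzero]
  · rw [← hadd, add_neg_cancel, hzero]

theorem measure_union_image_le_two_mul {T : G → X → X} {μ : Measure X}
    (hadd : ∀ m n x, T (m + n) x = T m (T n x)) (hzero : ∀ x, T 0 x = x)
    (hmp : ∀ n, MeasurePreserving (T n) μ μ) (v : G) {C : Set X} (hC : MeasurableSet C) :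
    μ (C ∪ T v '' C) ≤ 2 * μ C := by
  calc μ (C ∪ T v '' C) ≤ μ C + μ (T v '' C) := measure_union_le _ _
    _ = 2 * μ C := by
      rw [image_eq_preimage_neg hadd hzero, (hmp (-v)).measure_preimage hC.nullMeasurableSet,
        two_mul]

end Action

end MeasureTheory

theorem exhaustion_of_directional_recurrence_general
    {X : Type*} [MeasurableSpace X] (μ : Measure X) [SigmaFinite μ]
    (T : ℤ × ℤ → X → X)
    (hmp : ∀ n, MeasurePreserving (T n) μ μ)
    (hadd : ∀ m n x, T (m + n) x = T m (T n x)) (hzero : ∀ x, T 0 x = x)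
    (A : Set X) (hA : MeasurableSet A)
    (θ ε : ℝ)
    (hrec : ∀ B : Set X, B ⊆ A → MeasurableSet B → 0 < μ B →
      ∃ n : ℤ × ℤ, n ≠ 0 ∧ InTunnel θ ε (toR n) ∧ 0 < μ (B ∩ T n ⁻¹' B)) :
    ∃ F : Set (Set X × (ℤ × ℤ)), F.Countable ∧
      (∀ p ∈ F, MeasurableSet p.1 ∧ p.1 ⊆ A ∧ 0 < μ p.1 ∧ p.2 ≠ 0 ∧
        InTunnel θ ε (toR p.2) ∧ T p.2 '' p.1 ⊆ A) ∧
      F.Pairwise (fun p q => Disjoint p.1 q.1) ∧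
      μ (⋃ p ∈ F, p.1 ∪ T p.2 '' p.1) = μ A ∧
      μ A ≤ 2 * ∑' p : F, μ (p : Set X × (ℤ × ℤ)).1 := by
  let S : Set (Set X × (ℤ × ℤ)) := {p | MeasurableSet p.1 ∧ p.2 ≠ 0 ∧ InTunnel θ ε (toR p.2)}
  have hS : ∀ p ∈ S, MeasurableSet (p.1 ∪ T p.2 '' p.1) := fun p hp => hp.1.union <| by
    rw [image_eq_preimage_neg hadd hzero]
    exact (hmp _).measurable hp.1
  have hpiece : ∀ B ⊆ A, MeasurableSet B → 0 < μ B →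
      ∃ p ∈ S, p.1 ∪ T p.2 '' p.1 ⊆ B ∧ 0 < μ (p.1 ∪ T p.2 '' p.1) := by
    intro B hBA hB hBpos
    obtain ⟨w, hw, hwθ, hwpos⟩ := hrec B hBA hB hBpos
    refine ⟨(B ∩ T w ⁻¹' B, w), ⟨hB.inter ((hmp w).measurable hB), hw, hwθ⟩,
      Set.union_subset Set.inter_subset_left ?_,
      hwpos.trans_le (measure_mono Set.subset_union_left)⟩
    rw [Set.image_inter_preimage]
    exact Set.inter_subset_right
  obtain ⟨F, ⟨hFS, hFdisj, hFA⟩, hFc, hFae⟩ :=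
    exists_countable_isPacking_biUnion_ae_eq hA hS hpiece
  have hle : ∀ p ∈ F, μ (p.1 ∪ T p.2 '' p.1) ≤ 2 * μ p.1 := fun p hp =>
    measure_union_image_le_two_mul hadd hzero hmp p.2 (hFS hp).1
  refine ⟨F, hFc, fun p hp => ⟨(hFS hp).1, Set.subset_union_left.trans (hFA p hp).1,
    (ENNReal.mul_pos_iff.1 ((hFA p hp).2.trans_le (hle p hp))).2, (hFS hp).2.1, (hFS hp).2.2,
    Set.subset_union_right.trans (hFA p hp).1⟩,
    hFdisj.mono' fun p q h => h.mono Set.subset_union_left Set.subset_union_left,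
    measure_congr hFae, ?_⟩
  calc μ A = μ (⋃ p ∈ F, p.1 ∪ T p.2 '' p.1) := (measure_congr hFae).symm
    _ = ∑' p : F, μ (p.1.1 ∪ T p.1.2 '' p.1.1) :=
      measure_biUnion hFc hFdisj fun p hp => hS p (hFS hp)
    _ ≤ ∑' p : F, 2 * μ p.1.1 := ENNReal.tsum_le_tsum fun p => hle p p.2
    _ = 2 * ∑' p : F, μ (p : Set X × (ℤ × ℤ)).1 := ENNReal.tsum_mul_left

/-- The exhaustion step: if every positive measure subset of `A` returns to itself under some
vector in the `ε`-tunnel of `θ`, then `A` is exhausted by countably many pairwise disjoint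
pieces together with their images. -/
theorem exhaustion_of_directional_recurrence
    {X : Type*} [MeasurableSpace X] (μ : Measure X) [SigmaFinite μ]
    (T : ℤ × ℤ → X → X)
    (hmp : ∀ n, MeasurePreserving (T n) μ μ)
    (hadd : ∀ m n x, T (m + n) x = T m (T n x)) (hzero : ∀ x, T 0 x = x)
    (A : Set X) (hA : MeasurableSet A) (hApos : 0 < μ A) (hAfin : μ A < ⊤)
    (θ ε : ℝ) (hε : 0 < ε)
    (hrec : ∀ B : Set X, B ⊆ A → MeasurableSet B → 0 < μ B →
      ∃ n : ℤ × ℤ, n ≠ 0 ∧ InTunnel θ ε (toR n) ∧ 0 < μ (B ∩ T n ⁻¹' B)) :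
    ∃ F : Set (Set X × (ℤ × ℤ)), F.Countable ∧
      (∀ p ∈ F, MeasurableSet p.1 ∧ p.1 ⊆ A ∧ 0 < μ p.1 ∧ p.2 ≠ 0 ∧
        InTunnel θ ε (toR p.2) ∧ T p.2 '' p.1 ⊆ A) ∧
      F.Pairwise (fun p q => Disjoint p.1 q.1) ∧
      μ (⋃ p ∈ F, p.1 ∪ T p.2 '' p.1) = μ A ∧
      μ A ≤ 2 * ∑' p : F, μ (p : Set X × (ℤ × ℤ)).1 :=
  exhaustion_of_directional_recurrence_general μ T hmp hadd hzero A hA θ ε hrec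
end
end

section
/- Let μ be a finite measure, A a measurable set with μ(A) > 0, C a measurable set with μ(A △ C) < ε·μ(A) for some 0 < ε < 1/100, and let A₁, …, A_k be pairwise disjoint subsets of A with μ(∪ᵢAᵢ) > (1/4)·μ(A). Define 𝓘 = {i : μ(Aᵢ ∩ C) > (1 − 2√ε)·μ(Aᵢ)}. Then μ(∪_{i∉𝓘} Aᵢ) ≤ 2√ε · μ(∪_{i=1}^k Aᵢ). -/
open MeasureTheory

noncomputable section

variable {X : Type*} [MeasurableSpace X]

theorem ofReal_mul_le_measure_diff_of_measure_inter_le {μ : Measure X} {s t : Set X}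
    (ht : MeasurableSet t) (hs : μ s ≠ ⊤) {δ : ℝ} (hδ₀ : 0 ≤ δ) (hδ₁ : δ ≤ 1)
    (h : μ (s ∩ t) ≤ ENNReal.ofReal (1 - δ) * μ s) :
    ENNReal.ofReal δ * μ s ≤ μ (s \ t) := by
  have hsplit : ENNReal.ofReal (1 - δ) * μ s + ENNReal.ofReal δ * μ s = μ s := by
    rw [← add_mul, ← ENNReal.ofReal_add (by linarith) hδ₀, sub_add_cancel, ENNReal.ofReal_one,
      one_mul]
  have hle : ENNReal.ofReal (1 - δ) * μ s + ENNReal.ofReal δ * μ s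
      ≤ ENNReal.ofReal (1 - δ) * μ s + μ (s \ t) := by
    conv_lhs => rw [hsplit, ← measure_inter_add_sdiff s ht]
    gcongr
  exact (ENNReal.add_le_add_iff_left (ENNReal.mul_ne_top ENNReal.ofReal_ne_top hs)).mp hle

theorem mul_measure_biUnion_le_measure_biUnion_diff {ι : Type*} {μ : Measure X}
    {S : Set ι} (hS : S.Countable) {As : ι → Set X} (hd : S.PairwiseDisjoint As)
    (hm : ∀ i ∈ S, MeasurableSet (As i)) {t : Set X} (ht : MeasurableSet t) {δ : ENNReal}
    (h : ∀ i ∈ S, δ * μ (As i) ≤ μ (As i \ t)) :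
    δ * μ (⋃ i ∈ S, As i) ≤ μ ((⋃ i ∈ S, As i) \ t) := by
  simp only [Set.iUnion_sdiff]
  rw [measure_biUnion hS hd hm,
    measure_biUnion hS (hd.mono fun _ ↦ Set.sdiff_subset) fun i hi ↦ (hm i hi).diff ht,
    ← ENNReal.tsum_mul_left]
  exact ENNReal.tsum_le_tsum fun i ↦ h i i.2

theorem badly_covered_pieces_small_general
    {X : Type*} [MeasurableSpace X] (μ : Measure X) [IsFiniteMeasure μ]
    (A C : Set X) (hC : MeasurableSet C)
    (ε : ℝ) (hε : 0 < ε) (hε' : ε < 1/100)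
    (hAC : μ (symmDiff A C) < ENNReal.ofReal ε * μ A)
    (k : ℕ) (As : Fin k → Set X) (hmeas : ∀ i, MeasurableSet (As i))
    (hsub : ∀ i, As i ⊆ A)
    (hdisj : Pairwise fun i j => Disjoint (As i) (As j))
    (hcover : ENNReal.ofReal (1/4) * μ A < μ (⋃ i, As i)) :
    μ (⋃ i ∈ {i : Fin k |
        ¬ ENNReal.ofReal (1 - 2 * Real.sqrt ε) * μ (As i) < μ (As i ∩ C)}, As i)
      ≤ ENNReal.ofReal (2 * Real.sqrt ε) * μ (⋃ i, As i) := by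
  set δ := 2 * Real.sqrt ε
  set bad := {i : Fin k | ¬ ENNReal.ofReal (1 - δ) * μ (As i) < μ (As i ∩ C)}
  have hδ₀ : 0 < δ := by positivity
  have hδ₁ : δ ≤ 1 := by nlinarith [Real.sq_sqrt hε.le, Real.sqrt_nonneg ε]
  have hδδ : δ * δ = 4 * ε := by nlinarith [Real.sq_sqrt hε.le]
  have hbad_diff : ∀ i ∈ bad, ENNReal.ofReal δ * μ (As i) ≤ μ (As i \ C) := fun i hi ↦
    ofReal_mul_le_measure_diff_of_measure_inter_le hC (measure_ne_top μ _) hδ₀.le hδ₁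
      (not_lt.mp hi)
  have hmarkov : ENNReal.ofReal δ * μ (⋃ i ∈ bad, As i) ≤ μ (A \ C) :=
    (mul_measure_biUnion_le_measure_biUnion_diff bad.to_countable (hdisj.set_pairwise bad)
      (fun i _ ↦ hmeas i) hC hbad_diff).trans
      (measure_mono (Set.sdiff_subset_sdiff_left (Set.iUnion₂_subset fun i _ ↦ hsub i)))
  -- `4 ε = δ²`, which is why the threshold is `2 √ε`: the `4` is paid for by the covering bound.
  have hAC_small : μ (A \ C) ≤ ENNReal.ofReal δ * (ENNReal.ofReal δ * μ (⋃ i, As i)) :=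
    calc μ (A \ C) ≤ ENNReal.ofReal ε * μ A := (measure_mono le_sup_left).trans hAC.le
      _ = ENNReal.ofReal (4 * ε) * (ENNReal.ofReal (1 / 4) * μ A) := by
          rw [← mul_assoc, ← ENNReal.ofReal_mul (by positivity)]
          ring_nf
      _ ≤ ENNReal.ofReal δ * (ENNReal.ofReal δ * μ (⋃ i, As i)) := by
          rw [← mul_assoc (ENNReal.ofReal δ), ← ENNReal.ofReal_mul hδ₀.le, hδδ]
          gcongr
  exact (ENNReal.mul_le_mul_iff_right (by simpa using hδ₀) ENNReal.ofReal_ne_top).mp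
    (hmarkov.trans hAC_small)

/-- Markov-type lemma: if `C` approximates `A` well and the disjoint pieces `Aᵢ ⊆ A` cover at
least a quarter of `A`, then the pieces not almost covered by `C` have small total measure. -/
theorem badly_covered_pieces_small
    {X : Type*} [MeasurableSpace X] (μ : Measure X) [IsFiniteMeasure μ]
    (A C : Set X) (hA : MeasurableSet A) (hC : MeasurableSet C) (hApos : 0 < μ A)
    (ε : ℝ) (hε : 0 < ε) (hε' : ε < 1/100)
    (hAC : μ (symmDiff A C) < ENNReal.ofReal ε * μ A)
    (k : ℕ) (As : Fin k → Set X) (hmeas : ∀ i, MeasurableSet (As i))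
    (hsub : ∀ i, As i ⊆ A)
    (hdisj : Pairwise fun i j => Disjoint (As i) (As j))
    (hcover : ENNReal.ofReal (1/4) * μ A < μ (⋃ i, As i)) :
    μ (⋃ i ∈ {i : Fin k |
        ¬ ENNReal.ofReal (1 - 2 * Real.sqrt ε) * μ (As i) < μ (As i ∩ C)}, As i)
      ≤ ENNReal.ofReal (2 * Real.sqrt ε) * μ (⋃ i, As i) :=
  badly_covered_pieces_small_general μ A C hC ε hε hε' hAC k As hmeas hsub hdisj hcover
end
end
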